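/- arXiv:0712.0788 — 4 statements merged into one kernel-verified Lean document; each statement's English description precedes it below -/
import Mathlib

section
/- Let D be a triangulated category and ι : D' → D the inclusion of a full triangulated subcategory which admits a right adjoint ρ : D → D'. Let D'^⊥ denote the full subcategory of objects Y ∈ D with Hom_D(Z, Y) = 0 for all Z ∈ D'. Then: (1) for every X ∈ D, the cone of the counit ι ρ(X) → X lies in D'^⊥; and (2) the composite functor D'^⊥ ↪ D → D/D' is an equivalence of triangulated categories. -/
/-!
The counit `ι ρ X ⟶ X` induces bijections on `Hom(W, -)` for every `W ∈ D'`, also after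
shifting since `D'` is shift-stable, so the long exact `Hom(W, -)`-sequence of its distinguished
triangle kills `Hom(W, Z)` on the cone `Z`. The morphism `X ⟶ Z` of that triangle lies in
`S.trW`, and every morphism of `S.trW` induces bijections on `Hom(-, Y)` for `Y ∈ D'^⊥`; hence
`X ⟶ Z` is a reflection of `X` into `D'^⊥`. The reflector inverts `S.trW` and has its unit in
`S.trW`, so it is itself a localization of `D` at `S.trW`, and uniqueness of localizations turns
`D'^⊥ ↪ D ⟶ E` into an equivalence.
-/

open CategoryTheory Limits Pretriangulated Triangulated

namespace CategoryTheory.Adjunction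

variable {C₁ C₂ : Type*} [Category C₁] [Category C₂] {G : C₁ ⥤ C₂} {F : C₂ ⥤ C₁}
  (adj : G ⊣ F) [F.Full] [F.Faithful]
include adj

lemma unit_app_mem_of_mem {W : MorphismProperty C₁} [W.RespectsIso] (hG : W.IsInvertedBy G)
    {X : C₁} {Y : C₂} (w : X ⟶ F.obj Y) (hw : W w) : W (adj.unit.app X) := by
  have hiso : IsIso (F.map ((adj.homEquiv X Y).symm w)) := by
    have := hG w hw
    rw [homEquiv_counit]
    infer_instance
  have hfac : adj.unit.app X ≫ F.map ((adj.homEquiv X Y).symm w) = w :=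
    (adj.homEquiv_unit _ _ _).symm.trans ((adj.homEquiv X Y).apply_symm_apply w)
  rw [← W.cancel_right_of_respectsIso _ (F.map ((adj.homEquiv X Y).symm w)), hfac]
  exact hw

lemma isLocalization_of_unit_app_mem (W : MorphismProperty C₁) (hG : W.IsInvertedBy G)
    (hunit : ∀ X, W (adj.unit.app X)) : G.IsLocalization W := by
  have : ∀ X, IsIso ((Functor.whiskerRight adj.unit W.Q).app X) :=
    fun X => Localization.inverts W.Q W _ (hunit X)
  have : IsIso (Functor.whiskerRight adj.unit W.Q) := NatIso.isIso_of_isIso_app _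
  let e : W.Localization ≌ C₂ := Equivalence.mk (Localization.lift G hG W.Q) (F ⋙ W.Q)
    (Localization.liftNatIso W.Q W W.Q (G ⋙ F ⋙ W.Q) _ _
      (W.Q.leftUnitor.symm ≪≫ asIso (Functor.whiskerRight adj.unit W.Q)))
    (Functor.associator _ _ _ ≪≫ Functor.isoWhiskerLeft _ (Localization.fac G hG W.Q) ≪≫
      asIso adj.counit)
  exact Functor.IsLocalization.of_equivalence_target W.Q W G e (Localization.fac G hG W.Q)

lemma isEquivalence_comp_of_isLocalization (W : MorphismProperty C₁) [G.IsLocalization W]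
    {E : Type*} [Category E] (L : C₁ ⥤ E) [L.IsLocalization W] : (F ⋙ L).IsEquivalence :=
  Functor.isEquivalence_of_iso <|
    (Localization.uniq G L W).functor.leftUnitor.symm ≪≫
      Functor.isoWhiskerRight (asIso adj.counit).symm _ ≪≫ Functor.associator _ _ _ ≪≫
      Functor.isoWhiskerLeft F (Localization.compUniqFunctor G L W)

end CategoryTheory.Adjunction

namespace CategoryTheory.ObjectProperty

variable {C : Type*} [Category C]

lemma isRightAdjoint_ι_of_exists_isLocal (P : ObjectProperty C)
    (h : ∀ X : C, ∃ (Y : P.FullSubcategory) (η : X ⟶ P.ι.obj Y), P.isLocal η) :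
    P.ι.IsRightAdjoint := by
  choose r η hη using h
  let e : ∀ X Y, (r X ⟶ Y) ≃ (X ⟶ P.ι.obj Y) := fun X Y =>
    P.fullyFaithfulι.homEquiv.trans (isLocal.homEquiv (hη X) _ Y.property)
  exact ⟨_, ⟨Adjunction.adjunctionOfEquivLeft e (fun X Y Y' g h => by
    change η X ≫ (h ≫ g).hom = (η X ≫ h.hom) ≫ g.hom
    simp)⟩⟩

variable [HasShift C ℤ] {P : ObjectProperty C}

lemma isColocal.shift [P.IsStableUnderShift ℤ] {X Y : C} {f : X ⟶ Y} (hf : P.isColocal f)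
    (n : ℤ) : P.isColocal (f⟦n⟧') := by
  intro W hW
  let adj := (shiftEquiv C n).symm.toAdjunction
  have hcomp : (fun g : W ⟶ X⟦n⟧ => g ≫ f⟦n⟧') =
      adj.homEquiv W Y ∘ (fun g => g ≫ f) ∘ (adj.homEquiv W X).symm := by
    ext g
    change _ = adj.homEquiv W Y ((adj.homEquiv W X).symm g ≫ f)
    rw [adj.homEquiv_naturality_right]
    exact congrArg (· ≫ f⟦n⟧') ((adj.homEquiv W X).apply_symm_apply g).symm
  rw [hcomp]
  exact (adj.homEquiv W Y).bijective.comp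
    ((hf _ (P.le_shift (-n) W hW)).comp (adj.homEquiv W X).symm.bijective)

variable [Preadditive C] [HasZeroObject C] [∀ n : ℤ, (shiftFunctor C n).Additive]
  [Pretriangulated C]

lemma rightOrthogonal_obj₃_of_isColocal_mor₁ [P.IsStableUnderShift ℤ] {T : Triangle C}
    (hT : T ∈ distTriang C) (h : P.isColocal T.mor₁) : P.rightOrthogonal T.obj₃ := by
  intro W f hW
  have hf₃ : f ≫ T.mor₃ = 0 :=
    (h.shift 1 W hW).injective (by simp [comp_distTriang_mor_zero₃₁ T hT])
  obtain ⟨g, rfl⟩ := Triangle.coyoneda_exact₃ T hT f hf₃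
  obtain ⟨g', rfl⟩ := (h W hW).surjective g
  simp [comp_distTriang_mor_zero₁₂ T hT]

variable (P) in
lemma trW_le_isLocal_rightOrthogonal [P.IsTriangulated] : P.trW ≤ P.rightOrthogonal.isLocal :=
  (le_isLocal_iff _ _).2 (isLocal_trW P).ge

variable [P.IsStableUnderShift ℤ] {ρ : C ⥤ P.FullSubcategory} (adj : P.ι ⊣ ρ)
include adj

lemma rightOrthogonal_of_counit_distTriang {X Z : C} {g : X ⟶ Z}
    {w : Z ⟶ (P.ι.obj (ρ.obj X))⟦(1 : ℤ)⟧}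
    (hT : Triangle.mk (adj.counit.app X) g w ∈ distTriang C) : P.rightOrthogonal Z :=
  rightOrthogonal_obj₃_of_isColocal_mor₁ hT
    fun W hW => isColocal_adj_counit_app adj X W ⟨⟨W, hW⟩, rfl⟩

lemma exists_trW_to_rightOrthogonal (X : C) :
    ∃ (Y : P.rightOrthogonal.FullSubcategory) (w : X ⟶ P.rightOrthogonal.ι.obj Y), P.trW w := by
  obtain ⟨Z, g, w, hT⟩ := distinguished_cocone_triangle (adj.counit.app X)
  exact ⟨⟨Z, rightOrthogonal_of_counit_distTriang adj hT⟩, g, trW.mk' P hT (ρ.obj X).property⟩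

end CategoryTheory.ObjectProperty

open ObjectProperty

/-- Let `ι : D' ⥤ D` be the inclusion of a full triangulated subcategory `S` admitting a
right adjoint `ρ`.  Let `D'^⊥` be the right orthogonal of `D'`, i.e. the objects `Y` with
`Hom(Z, Y) = 0` for all `Z ∈ D'`.  Then (1) every cone of the counit `ι ρ X ⟶ X` lies in
`D'^⊥`, and (2) the composite `D'^⊥ ↪ D ⟶ D/D'` is an equivalence, where `D/D'` is
realized by any localization `L : D ⥤ E` of `D` at the class `S.W` of morphisms whose
cone lies in `D'`. -/
theorem rightOrthogonal_equiv_verdier_quotient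
    {D : Type*} [Category D] [Preadditive D] [HasZeroObject D] [HasShift D ℤ]
    [∀ n : ℤ, (shiftFunctor D n).Additive] [Pretriangulated D]
    (S : ObjectProperty D) [S.IsTriangulated]
    (ρ : D ⥤ S.FullSubcategory)
    (adj : S.ι ⊣ ρ)
    {E : Type*} [Category E] (L : D ⥤ E) [L.IsLocalization S.trW] :
    (∀ (X Z : D) (g : X ⟶ Z)
      (w : Z ⟶ (S.ι.obj (ρ.obj X))⟦(1 : ℤ)⟧),
      (Triangle.mk (adj.counit.app X) g w ∈ distTriang D) →
        ∀ (W : D), S W → ∀ f : W ⟶ Z, f = 0) ∧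
    (ObjectProperty.ι (fun Y : D => ∀ (W : D), S W → ∀ f : W ⟶ Y, f = 0)
      ⋙ L).IsEquivalence := by
  refine ⟨fun X Z g w hT W hW f => rightOrthogonal_of_counit_distTriang adj hT f hW, ?_⟩
  have hP : (fun Y : D => ∀ (W : D), S W → ∀ f : W ⟶ Y, f = 0) = S.rightOrthogonal := by
    ext Y
    exact ⟨fun h W f hW => h W hW f, fun h W hW f => h f hW⟩
  rw [hP]
  have hloc := S.trW_le_isLocal_rightOrthogonal
  have hrefl := exists_trW_to_rightOrthogonal adj
  have : S.rightOrthogonal.ι.IsRightAdjoint := isRightAdjoint_ι_of_exists_isLocal _ fun X =>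
    let ⟨Y, w, hw⟩ := hrefl X
    ⟨Y, w, hloc w hw⟩
  let adjR := Adjunction.ofIsRightAdjoint S.rightOrthogonal.ι
  have hinv : S.trW.IsInvertedBy S.rightOrthogonal.ι.leftAdjoint := fun _ _ f hf =>
    (isLocal_iff_isIso_map adjR f).1 (by rintro _ ⟨Y, rfl⟩; exact hloc f hf _ Y.property)
  have : S.rightOrthogonal.ι.leftAdjoint.IsLocalization S.trW :=
    adjR.isLocalization_of_unit_app_mem _ hinv fun X =>
      let ⟨_, w, hw⟩ := hrefl X
      adjR.unit_app_mem_of_mem hinv w hw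
  exact adjR.isEquivalence_comp_of_isLocalization S.trW L
end

section
/- Let F : C → D be a monoidal functor between monoidal categories admitting a right adjoint G : D → C. For X ∈ C and Y ∈ D, consider the canonical 'projection' morphism X ⊗ G(Y) → G(F(X) ⊗ Y), defined as the adjoint of the map F(X ⊗ G(Y)) ≅ F(X) ⊗ F(G(Y)) → F(X) ⊗ Y (using the monoidal structure of F and the counit of the adjunction). If X has a left dual in C, then this projection morphism is an isomorphism for every Y ∈ D. -/
/-!
Tensoring on the left with `X` is right adjoint to tensoring with its dual `Xd`, and since `F`
carries the duality `(X, Xd)` to a duality `(F X, F Xd)`, the same holds for `F X` and `F Xd`.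
With respect to these two adjunctions, `δ : F (X ⊗ -) ⟶ F X ⊗ F -` is the mate of the
tensorator `μ : F Xd ⊗ F - ⟶ F (Xd ⊗ -)`, and the projection morphism is the mate of `δ` with
respect to `F ⊣ G`. Taking mates twice yields the conjugate of `μ`, an isomorphism because `μ` is.
-/

open CategoryTheory MonoidalCategory

namespace CategoryTheory

section Mates

variable {A B C D : Type*} [Category A] [Category B] [Category C] [Category D]
  {G : A ⥤ C} {H : B ⥤ D} {L₁ : A ⥤ B} {R₁ : B ⥤ A} {L₂ : C ⥤ D} {R₂ : D ⥤ C}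

theorem mateEquiv_app_eq_homEquiv (adj₁ : L₁ ⊣ R₁) (adj₂ : L₂ ⊣ R₂) (α : TwoSquare G L₁ L₂ H)
    (d : B) :
    (mateEquiv adj₁ adj₂ α).natTrans.app d =
      adj₂.homEquiv _ _ (α.natTrans.app _ ≫ H.map (adj₁.counit.app d)) := by
  simp [Adjunction.homEquiv_unit]

end Mates

section Duality

open Functor.LaxMonoidal Functor.OplaxMonoidal

variable {C D : Type*} [Category C] [Category D] [MonoidalCategory C] [MonoidalCategory D]

@[reducible]
def ExactPairing.ofTriangles {X Y : C} (η : 𝟙_ C ⟶ X ⊗ Y) (ε : Y ⊗ X ⟶ 𝟙_ C)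
    (tri₁ : (λ_ X).inv ≫ η ▷ X ≫ (α_ X Y X).hom ≫ X ◁ ε ≫ (ρ_ X).hom = 𝟙 X)
    (tri₂ : (ρ_ Y).inv ≫ Y ◁ η ≫ (α_ Y X Y).inv ≫ ε ▷ Y ≫ (λ_ Y).hom = 𝟙 Y) :
    ExactPairing X Y where
  coevaluation' := η
  evaluation' := ε
  coevaluation_evaluation' := by
    simpa using (ρ_ Y).hom ≫= tri₂ =≫ (λ_ Y).inv
  evaluation_coevaluation' := by
    simpa using (λ_ X).hom ≫= tri₁ =≫ (ρ_ X).inv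

@[reducible]
def ExactPairing.map (F : C ⥤ D) [F.Monoidal] (X Y : C) [ExactPairing X Y] :
    ExactPairing (F.obj X) (F.obj Y) where
  coevaluation' := ε F ≫ F.map (η_ X Y) ≫ δ F X Y
  evaluation' := μ F Y X ≫ F.map (ε_ X Y) ≫ η F
  coevaluation_evaluation' := calc
    _ = F.obj Y ◁ ε F ≫ μ F Y (𝟙_ C) ≫ F.map (Y ◁ η_ X Y ≫ (α_ _ _ _).inv ≫ ε_ X Y ▷ Y) ≫
          δ F (𝟙_ C) Y ≫ η F ▷ F.obj Y := by
      simp only [Functor.map_comp, Functor.Monoidal.map_whiskerLeft,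
        Functor.Monoidal.map_whiskerRight, Functor.Monoidal.map_associator_inv, Category.assoc,
        Functor.Monoidal.μ_δ_assoc, whiskerLeft_comp, comp_whiskerRight]
    _ = _ := by
      rw [ExactPairing.coevaluation_evaluation]
      simp
  evaluation_coevaluation' := calc
    _ = ε F ▷ F.obj X ≫ μ F (𝟙_ C) X ≫ F.map (η_ X Y ▷ X ≫ (α_ _ _ _).hom ≫ X ◁ ε_ X Y) ≫
          δ F X (𝟙_ C) ≫ F.obj X ◁ η F := by
      simp only [Functor.map_comp, Functor.Monoidal.map_whiskerLeft,
        Functor.Monoidal.map_whiskerRight, Functor.Monoidal.map_associator, Category.assoc,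
        Functor.Monoidal.μ_δ_assoc, whiskerLeft_comp, comp_whiskerRight]
    _ = _ := by
      rw [ExactPairing.evaluation_coevaluation]
      simp

theorem ExactPairing.map_evaluation (F : C ⥤ D) [F.Monoidal] (X Y : C) [ExactPairing X Y] :
    letI := ExactPairing.map F X Y
    ε_ (F.obj X) (F.obj Y) = μ F Y X ≫ F.map (ε_ X Y) ≫ η F := rfl

theorem mateEquiv_tensorLeftAdjunction_commTensorLeft_hom_app (F : C ⥤ D) [F.Monoidal]
    (X Y : C) [ExactPairing X Y] (Z : C) :
    letI := ExactPairing.map F X Y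
    (mateEquiv (tensorLeftAdjunction X Y) (tensorLeftAdjunction (F.obj X) (F.obj Y))
      (.mk _ _ _ _ (Functor.Monoidal.commTensorLeft F Y).hom)).natTrans.app Z = δ F X Z := by
  let _ := ExactPairing.map F X Y
  rw [mateEquiv_app_eq_homEquiv, Adjunction.homEquiv_apply_eq]
  simp only [tensorLeftAdjunction, tensorLeftHomEquiv, Adjunction.mkOfHomEquiv_homEquiv,
    Adjunction.mkOfHomEquiv_counit_app, Equiv.symm_mk, Equiv.coe_fn_mk, whiskerLeft_id,
    Category.id_comp, Functor.Monoidal.commTensorLeft_hom_app, ExactPairing.map_evaluation,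
    Functor.id_obj, curriedTensor_obj_obj, Functor.map_comp, Functor.Monoidal.map_associator_inv,
    Functor.Monoidal.map_whiskerRight, Functor.Monoidal.map_leftUnitor, Category.assoc,
    Functor.Monoidal.μ_δ_assoc, comp_whiskerRight]

end Duality

end CategoryTheory

/-- **Projection formula.** Let `F : C ⥤ D` be a (strong) monoidal functor with right
adjoint `G`. For `X : C` and `Y : D`, the canonical projection morphism
`X ⊗ G(Y) ⟶ G(F(X) ⊗ Y)` — the adjoint of `F(X ⊗ G Y) ≅ F X ⊗ F (G Y) ⟶ F X ⊗ Y` —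
is an isomorphism whenever `X` has a left dual (given by coevaluation
`η : 𝟙 ⟶ X ⊗ Xd` and evaluation `ε : Xd ⊗ X ⟶ 𝟙` satisfying the triangle identities). -/
theorem projection_formula_isIso_of_dual
    {C : Type*} [Category C] [MonoidalCategory C]
    {D : Type*} [Category D] [MonoidalCategory D]
    (F : C ⥤ D) [F.Monoidal] (G : D ⥤ C) (adj : F ⊣ G)
    (X Xd : C) (η : 𝟙_ C ⟶ X ⊗ Xd) (ε : Xd ⊗ X ⟶ 𝟙_ C)
    (tri₁ : (λ_ X).inv ≫ (η ▷ X) ≫ (α_ X Xd X).hom ≫ (X ◁ ε) ≫ (ρ_ X).hom = 𝟙 X)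
    (tri₂ : (ρ_ Xd).inv ≫ (Xd ◁ η) ≫ (α_ Xd X Xd).inv ≫ (ε ▷ Xd) ≫ (λ_ Xd).hom = 𝟙 Xd)
    (Y : D) :
    IsIso ((adj.homEquiv (X ⊗ G.obj Y) (F.obj X ⊗ Y))
      (Functor.OplaxMonoidal.δ F X (G.obj Y) ≫ (F.obj X ◁ adj.counit.app Y))) := by
  let _ := ExactPairing.ofTriangles η ε tri₁ tri₂
  let _ := ExactPairing.map F X Xd
  have projection_eq_iterated_mate :
      adj.homEquiv (X ⊗ G.obj Y) (F.obj X ⊗ Y)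
        (Functor.OplaxMonoidal.δ F X (G.obj Y) ≫ F.obj X ◁ adj.counit.app Y) =
      (mateEquiv adj adj (mateEquiv (tensorLeftAdjunction X Xd)
        (tensorLeftAdjunction (F.obj X) (F.obj Xd))
        (.mk _ _ _ _ (Functor.Monoidal.commTensorLeft F Xd).hom))).natTrans.app Y := by
    rw [mateEquiv_app_eq_homEquiv, mateEquiv_tensorLeftAdjunction_commTensorLeft_hom_app]
    rfl
  rw [projection_eq_iterated_mate, iterated_mateEquiv_conjugateEquiv]
  infer_instance
end

section
/- Let D be a triangulated category equipped with a t-structure, and let D₁ ⊆ D be a full triangulated subcategory closed under isomorphisms whose inclusion functor E : D₁ → D admits a right adjoint R : D → D₁. Assume that the composite E∘R is left t-exact, i.e. E(R(X)) ∈ D^{≥0} whenever X ∈ D^{≥0}. Then D₁ is stable under the truncation functors of D: for every Z ∈ D₁, both τ^{≤0}(E Z) and τ^{≥1}(E Z) lie in the essential image of E. Consequently D₁ carries a unique t-structure for which E is t-exact. -/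
open CategoryTheory Limits Pretriangulated Triangulated

/-!
Let `ε : E R ⟶ 𝟭` be the counit and `A ⟶ Z ⟶ B ⟶ A⟦1⟧` a truncation triangle of `Z ∈ D₁`.
Since `E R` commutes with shifts, left t-exactness gives `E R B ∈ D^{≥1}`. The map `Z ⟶ B`
factors as `u ≫ ε_B`; as `A ∈ D^{≤0}`, the composite `A ⟶ Z ⟶ E R B` vanishes, so `u` factors
through `B` by some `s : B ⟶ E R B`. Then `s ≫ ε_B - 𝟙` kills `Z ⟶ B`, hence factors through
`A⟦1⟧ ∈ D^{≤0}` and is zero, and `ε_B ≫ s = 𝟙` because maps into `E R B` from `D₁` are detected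
by `ε_B`. So `B ≅ E R B ∈ D₁`, and then `A ∈ D₁` by the two-out-of-three property.
-/

namespace CategoryTheory

namespace Adjunction

variable {C D : Type*} [Category C] [Category D] {F : C ⥤ D} {G : D ⥤ C} (adj : F ⊣ G)

lemma exists_comp_counit_app_eq {X : C} {Y : D} (b : F.obj X ⟶ Y) :
    ∃ u : F.obj X ⟶ F.obj (G.obj Y), u ≫ adj.counit.app Y = b :=
  ⟨F.map (adj.homEquiv X Y b),
    (adj.homEquiv_counit X Y _).symm.trans ((adj.homEquiv X Y).symm_apply_apply b)⟩

lemma eq_of_comp_counit_app_eq [F.Full] {X : C} {Y : D} {f g : F.obj X ⟶ F.obj (G.obj Y)}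
    (h : f ≫ adj.counit.app Y = g ≫ adj.counit.app Y) : f = g := by
  obtain ⟨f, rfl⟩ := F.map_surjective f
  obtain ⟨g, rfl⟩ := F.map_surjective g
  rw [(adj.homEquiv X Y).symm.injective
    ((adj.homEquiv_counit X Y f).trans (h.trans (adj.homEquiv_counit X Y g).symm))]

end Adjunction

namespace Triangulated.TStructure

variable {D : Type*} [Category D] [Preadditive D] [HasZeroObject D] [HasShift D ℤ]
  [∀ n : ℤ, (shiftFunctor D n).Additive] [Pretriangulated D] (t : TStructure D)

lemma ge_obj_of_commShift {G : D ⥤ D} [G.CommShift ℤ]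
    (hG : ∀ X : D, t.ge 0 X → t.ge 0 (G.obj X)) (n : ℤ) {X : D} (hX : t.ge n X) :
    t.ge n (G.obj X) := by
  have h : t.ge 0 ((G.obj X)⟦n⟧) :=
    (t.ge 0).prop_of_iso ((G.commShiftIso n).app X) (hG _ (t.ge_shift n n 0 (add_zero n) X hX))
  rw [ge_iff_isGE] at h ⊢
  exact t.isGE_of_shift _ n n 0

lemma isIso_counit_app_of_distTriang {C : Type*} [Category C] {F : C ⥤ D} {G : D ⥤ C}
    (adj : F ⊣ G) [F.Full] {X : C} {A B : D} {a : A ⟶ F.obj X} {b : F.obj X ⟶ B}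
    {c : B ⟶ A⟦(1 : ℤ)⟧} (hT : Triangle.mk a b c ∈ distTriang D) (hA : t.le 0 A)
    (hB : t.ge 1 B) (hGB : t.ge 1 (F.obj (G.obj B))) : IsIso (adj.counit.app B) := by
  obtain ⟨u, hu⟩ := adj.exists_comp_counit_app_eq b
  obtain ⟨s, rfl⟩ : ∃ s : B ⟶ F.obj (G.obj B), u = b ≫ s :=
    Triangle.yoneda_exact₂ _ hT u (t.zero' _ hA hGB)
  have hA₁ : t.le 0 (A⟦(1 : ℤ)⟧) :=
    t.le_monotone (by lia : (-1 : ℤ) ≤ 0) _ (t.le_shift 0 1 (-1) (by lia) A hA)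
  have hsε : s ≫ adj.counit.app B = 𝟙 B := by
    have hb : b ≫ ((s ≫ adj.counit.app B : B ⟶ B) - 𝟙 B) = 0 := by
      rw [Preadditive.comp_sub, Category.comp_id, ← Category.assoc, hu, sub_self]
    obtain ⟨g, hg⟩ : ∃ g : A⟦(1 : ℤ)⟧ ⟶ B, (s ≫ adj.counit.app B : B ⟶ B) - 𝟙 B = c ≫ g :=
      Triangle.yoneda_exact₃ _ hT _ hb
    rw [t.zero' g hA₁ hB, comp_zero] at hg
    exact sub_eq_zero.1 hg
  have hεs : adj.counit.app B ≫ s = 𝟙 (F.obj (G.obj B)) :=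
    adj.eq_of_comp_counit_app_eq (by simp [hsε])
  exact ⟨s, hεs, hsε⟩

end Triangulated.TStructure

end CategoryTheory

/-- Let `D` be a triangulated category with a t-structure `t`, and let `D₁` be a full
triangulated subcategory (given by the iso-closed predicate `S.P`) whose inclusion
`E` admits a right adjoint `R` such that `E ∘ R` is left t-exact.  Then `D₁` is stable
under truncations:  for every `Z ∈ D₁` and every truncation triangle
`A ⟶ Z ⟶ B ⟶ A[1]` (with `A ∈ D^{≤0}`, `B ∈ D^{≥1}`), both `A` and `B` lie in `D₁`
(equivalently, in the essential image of `E`); consequently truncation triangles for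
objects of `D₁` exist entirely inside `D₁`, so `D₁` carries the (unique) t-structure
for which `E` is t-exact. -/
theorem subcategory_stable_under_truncation
    {D : Type*} [Category D] [Preadditive D] [HasZeroObject D] [HasShift D ℤ]
    [∀ n : ℤ, (shiftFunctor D n).Additive] [Pretriangulated D]
    (t : TStructure D)
    (S : ObjectProperty D) [S.IsTriangulated]
    (hiso : ∀ ⦃X Y : D⦄, (X ≅ Y) → S X → S Y)
    (R : D ⥤ S.FullSubcategory)
    (adj : S.ι ⊣ R)
    (hleft : ∀ X : D, t.ge 0 X →
      t.ge 0 ((S.ι).obj (R.obj X))) :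
    (∀ Z : D, S Z →
      ∀ (A B : D) (a : A ⟶ Z) (b : Z ⟶ B) (c : B ⟶ A⟦(1 : ℤ)⟧),
        (Triangle.mk a b c ∈ distTriang D) → t.le 0 A → t.ge 1 B →
          S A ∧ S B) ∧
    (∀ Z : D, S Z →
      ∃ (A B : D) (_ : t.le 0 A) (_ : t.ge 1 B) (_ : S A) (_ : S B)
        (a : A ⟶ Z) (b : Z ⟶ B) (c : B ⟶ A⟦(1 : ℤ)⟧),
        Triangle.mk a b c ∈ distTriang D) := by
  have : S.IsClosedUnderIsomorphisms := ⟨fun e h => hiso e h⟩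
  let := adj.rightAdjointCommShift ℤ
  have stable : ∀ Z : D, S Z →
      ∀ (A B : D) (a : A ⟶ Z) (b : Z ⟶ B) (c : B ⟶ A⟦(1 : ℤ)⟧),
        (Triangle.mk a b c ∈ distTriang D) → t.le 0 A → t.ge 1 B → S A ∧ S B := by
    intro Z hZ A B a b c hT hA hB
    have := t.isIso_counit_app_of_distTriang adj (X := ⟨Z, hZ⟩) hT hA hB
      (t.ge_obj_of_commShift (G := R ⋙ S.ι) hleft 1 hB)
    have hSB : S B := S.prop_of_iso (asIso (adj.counit.app B)) (R.obj B).2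
    have hSA : S.isoClosure A := S.ext_of_isTriangulatedClosed₁' _ hT hZ hSB
    exact ⟨S.isoClosure_eq_self ▸ hSA, hSB⟩
  refine ⟨stable, fun Z hZ => ?_⟩
  obtain ⟨A, B, hA, hB, a, b, c, hT⟩ := t.exists_triangle_zero_one Z
  obtain ⟨hSA, hSB⟩ := stable Z hZ A B a b c hT hA hB
  exact ⟨A, B, hA, hB, hSA, hSB, a, b, c, hT⟩
end

section
/- Let D be a triangulated category with a t-structure, E a triangulated category, and Ψ : E → D a triangulated functor admitting a right adjoint Φ : D → E. Assume that the counit Ψ(Φ(Y)) → Y is an isomorphism for every Y ∈ D^+ (in particular Φ restricted to D^+ is fully faithful). Define E^{≤0} := { X ∈ E : Ψ(X) ∈ D^{≤0} } and E^{>0} := essential image of Φ restricted to D^{>0}. Then (E^{≤0}, E^{>0}[1]) is a t-structure on E; moreover Ψ is t-exact for this t-structure, and Φ restricts to a t-exact equivalence D^+ → E^+ with quasi-inverse given by Ψ. -/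
open CategoryTheory Limits Pretriangulated Triangulated

/-!
The truncation triangle of `X ∈ E` is obtained by transporting that of `Ψ X` along the
adjunction: if `X₀ ⟶ Ψ X ⟶ Y₁ ⟶ X₀⟦1⟧` is the truncation triangle of `Ψ X`, complete the
adjunct `X ⟶ Φ Y₁` of the second map to a distinguished triangle `X' ⟶ X ⟶ Φ Y₁ ⟶ X'⟦1⟧`.
Applying `Ψ` and using that the counit is an isomorphism at `Y₁ ∈ D⁺` identifies its image
with the truncation triangle of `Ψ X`, so `Ψ X' ≅ X₀ ∈ D^{≤0}`. Orthogonality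
`Hom(E^{≤0}, E^{≥1}) = 0` is orthogonality in `D` transported by the adjunction.
-/

namespace CategoryTheory

namespace Adjunction

variable {C D : Type*} [Category C] [Category D] {F : C ⥤ D} {G : D ⥤ C} (adj : F ⊣ G)

lemma isIso_unit_app_obj_of_isIso_counit_app (Y : D) [IsIso (adj.counit.app Y)] :
    IsIso (adj.unit.app (G.obj Y)) :=
  have : IsIso (adj.unit.app (G.obj Y) ≫ G.map (adj.counit.app Y)) := by
    rw [right_triangle_components]
    exact IsIso.id _
  IsIso.of_isIso_comp_right _ (G.map (adj.counit.app Y))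

lemma isIso_unit_app_of_iso_obj_of_isIso_counit_app {X : C} {Y : D} (e : X ≅ G.obj Y)
    [IsIso (adj.counit.app Y)] : IsIso (adj.unit.app X) :=
  (NatTrans.isIso_app_iff_of_iso adj.unit e).2 (adj.isIso_unit_app_obj_of_isIso_counit_app Y)

end Adjunction

namespace Pretriangulated

variable {C : Type*} [Category C] [Preadditive C] [HasZeroObject C] [HasShift C ℤ]
  [∀ n : ℤ, (shiftFunctor C n).Additive] [Pretriangulated C]

lemma nonempty_iso_obj₁_of_iso₂₃ {T₁ T₂ : Triangle C} (hT₁ : T₁ ∈ distTriang C)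
    (hT₂ : T₂ ∈ distTriang C) (b : T₁.obj₂ ≅ T₂.obj₂) (c : T₁.obj₃ ≅ T₂.obj₃)
    (comm : T₁.mor₂ ≫ c.hom = b.hom ≫ T₂.mor₂) : Nonempty (T₁.obj₁ ≅ T₂.obj₁) := by
  obtain ⟨a, ha₁, ha₂⟩ :=
    complete_distinguished_triangle_morphism₁ T₁ T₂ hT₁ hT₂ b.hom c.hom comm
  have : IsIso a := isIso₁_of_isIso₂₃ (Triangle.homMk T₁ T₂ a b.hom c.hom ha₁ comm ha₂) hT₁ hT₂
    (inferInstanceAs (IsIso b.hom)) (inferInstanceAs (IsIso c.hom))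
  exact ⟨asIso a⟩

end Pretriangulated

variable {D : Type*} [Category D] [Preadditive D] [HasZeroObject D] [HasShift D ℤ]
  [∀ n : ℤ, (shiftFunctor D n).Additive] [Pretriangulated D]
  {E : Type*} [Category E] [Preadditive E] [HasZeroObject E] [HasShift E ℤ]
  [∀ n : ℤ, (shiftFunctor E n).Additive] [Pretriangulated E]
  {Ψ : E ⥤ D} {Φ : D ⥤ E} (adj : Ψ ⊣ Φ)

namespace Adjunction

lemma exists_distTriang_homEquiv_of_isIso_counit_app [Ψ.CommShift ℤ] [Ψ.IsTriangulated]
    {A : E} {X Y : D} {f : X ⟶ Ψ.obj A} {g : Ψ.obj A ⟶ Y} {h : Y ⟶ X⟦(1 : ℤ)⟧}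
    (hT : Triangle.mk f g h ∈ distTriang D) [IsIso (adj.counit.app Y)] :
    ∃ (X' : E) (f' : X' ⟶ A) (h' : Φ.obj Y ⟶ X'⟦(1 : ℤ)⟧),
      Triangle.mk f' (adj.homEquiv A Y g) h' ∈ distTriang E ∧ Nonempty (Ψ.obj X' ≅ X) := by
  obtain ⟨X', f', h', hT'⟩ := distinguished_cocone_triangle₁ (adj.homEquiv A Y g)
  refine ⟨X', f', h', hT', nonempty_iso_obj₁_of_iso₂₃ (Ψ.map_distinguished _ hT') hT
    (Iso.refl _) (asIso (adj.counit.app Y) : Ψ.obj (Φ.obj Y) ≅ Y) ?_⟩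
  change Ψ.map (adj.homEquiv A Y g) ≫ adj.counit.app Y = 𝟙 (Ψ.obj A) ≫ g
  simp [homEquiv_unit]

end Adjunction

namespace Triangulated.TStructure

variable (tD : TStructure D) [Ψ.CommShift ℤ] [Ψ.IsTriangulated]

noncomputable def transfer (hcounit : ∀ Y : D, tD.ge 1 Y → IsIso (adj.counit.app Y)) : TStructure E where
  le n := (tD.le n).inverseImage Ψ
  ge n := (tD.ge n).map Φ
  le_shift n a n' h X hX :=
    (tD.le n').prop_of_iso ((Ψ.commShiftIso a).app X).symm (tD.le_shift n a n' h _ hX)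
  ge_shift := by
    rintro n a n' h _ ⟨Y, hY, ⟨e⟩⟩
    exact ⟨Y⟦a⟧, tD.ge_shift n a n' h Y hY,
      ⟨(Adjunction.RightAdjointCommShift.iso adj a).app Y ≪≫ (shiftFunctor E a).mapIso e⟩⟩
  zero' := by
    rintro X _ f hX ⟨Z, hZ, ⟨e⟩⟩
    have hadj : (adj.homEquiv X Z).symm (f ≫ e.inv) = 0 := tD.zero' _ hX hZ
    have : f ≫ e.inv = 0 :=
      (adj.homEquiv X Z).symm.injective (by rw [hadj, adj.homAddEquiv_symm_zero])
    simpa using this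
  le_zero_le _ := tD.le_zero_le _
  ge_one_le := ObjectProperty.map_monotone tD.ge_one_le Φ
  exists_triangle_zero_one A := by
    obtain ⟨X₀, Y₁, hX₀, hY₁, f, g, h, hT⟩ := tD.exists_triangle_zero_one (Ψ.obj A)
    have := hcounit Y₁ hY₁
    obtain ⟨X', f', h', hT', ⟨e⟩⟩ := adj.exists_distTriang_homEquiv_of_isIso_counit_app hT
    exact ⟨X', Φ.obj Y₁, (tD.le 0).prop_of_iso e.symm hX₀,
      (tD.ge 1).prop_map_obj Φ hY₁, f', _, h', hT'⟩

variable (hcounit : ∀ Y : D, tD.ge 1 Y → IsIso (adj.counit.app Y))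

lemma transfer_ge_iff (n : ℤ) (X : E) :
    (tD.transfer adj hcounit).ge n X ↔ ∃ Y : D, tD.ge n Y ∧ Nonempty (X ≅ Φ.obj Y) :=
  exists_congr fun _ => and_congr_right fun _ => ⟨fun ⟨e⟩ => ⟨e.symm⟩, fun ⟨e⟩ => ⟨e.symm⟩⟩

lemma ge_obj_of_transfer_ge {n : ℤ} {X : E} (hX : (tD.transfer adj hcounit).ge n X)
    (hcounit' : ∀ Y : D, tD.ge n Y → IsIso (adj.counit.app Y)) : tD.ge n (Ψ.obj X) := by
  obtain ⟨Y, hY, ⟨e⟩⟩ := hX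
  have := hcounit' Y hY
  exact (tD.ge n).prop_of_iso ((asIso (adj.counit.app Y)).symm ≪≫ Ψ.mapIso e) hY

lemma transfer_le_obj {n : ℤ} {Y : D} (hY : tD.le n Y) [IsIso (adj.counit.app Y)] :
    (tD.transfer adj hcounit).le n (Φ.obj Y) :=
  (tD.le n).prop_of_iso (asIso (adj.counit.app Y)).symm hY

lemma isIso_unit_app_of_transfer_ge {n : ℤ} {X : E} (hX : (tD.transfer adj hcounit).ge n X)
    (hcounit' : ∀ Y : D, tD.ge n Y → IsIso (adj.counit.app Y)) : IsIso (adj.unit.app X) := by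
  obtain ⟨Y, hY, ⟨e⟩⟩ := hX
  have := hcounit' Y hY
  exact adj.isIso_unit_app_of_iso_obj_of_isIso_counit_app e.symm

end Triangulated.TStructure

end CategoryTheory

/-- Let `D` be triangulated with a t-structure `tD`, `E` triangulated, and `Ψ : E ⥤ D` a
triangulated functor with right adjoint `Φ` whose counit `Ψ Φ Y ⟶ Y` is an isomorphism
for all `Y ∈ D⁺`.  Then `E` carries a t-structure `tE` with
`E^{≤0} = {X : Ψ X ∈ D^{≤0}}` and `E^{>0}` = the essential image of `Φ` on `D^{>0}`;
moreover `Ψ` is t-exact, and `Φ` restricts to a t-exact equivalence `D⁺ ⟶ E⁺` (it is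
t-exact on `D⁺` and its quasi-inverse is `Ψ`: the unit is an isomorphism on `E⁺`). -/
theorem transferred_tStructure_exists
    {D : Type*} [Category D] [Preadditive D] [HasZeroObject D] [HasShift D ℤ]
    [∀ n : ℤ, (shiftFunctor D n).Additive] [Pretriangulated D]
    {E : Type*} [Category E] [Preadditive E] [HasZeroObject E] [HasShift E ℤ]
    [∀ n : ℤ, (shiftFunctor E n).Additive] [Pretriangulated E]
    (tD : TStructure D)
    (Ψ : E ⥤ D) [Ψ.CommShift ℤ] [Ψ.IsTriangulated]
    (Φ : D ⥤ E) (adj : Ψ ⊣ Φ)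
    (hcounit : ∀ Y : D, (∃ n : ℤ, tD.ge n Y) → IsIso (adj.counit.app Y)) :
    ∃ tE : TStructure E,
      (∀ X : E, tE.le 0 X ↔ tD.le 0 (Ψ.obj X)) ∧
      (∀ X : E, tE.ge 1 X ↔ ∃ (Y : D), tD.ge 1 Y ∧ Nonempty (X ≅ Φ.obj Y)) ∧
      (∀ (n : ℤ) (X : E), tE.le n X → tD.le n (Ψ.obj X)) ∧
      (∀ (n : ℤ) (X : E), tE.ge n X → tD.ge n (Ψ.obj X)) ∧
      (∀ (n : ℤ) (Y : D), (∃ m : ℤ, tD.ge m Y) → tD.le n Y → tE.le n (Φ.obj Y)) ∧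
      (∀ (n : ℤ) (Y : D), (∃ m : ℤ, tD.ge m Y) → tD.ge n Y → tE.ge n (Φ.obj Y)) ∧
      (∀ X : E, (∃ n : ℤ, tE.ge n X) → IsIso (adj.unit.app X)) := by
  have hcounit_ge : ∀ n : ℤ, ∀ Y : D, tD.ge n Y → IsIso (adj.counit.app Y) :=
    fun n Y hY => hcounit Y ⟨n, hY⟩
  refine ⟨tD.transfer adj (hcounit_ge 1), fun _ => Iff.rfl,
    tD.transfer_ge_iff adj (hcounit_ge 1) 1, fun _ _ hX => hX,
    fun n _ hX => tD.ge_obj_of_transfer_ge adj (hcounit_ge 1) hX (hcounit_ge n), ?_,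
    fun n _ _ hY => (tD.ge n).prop_map_obj Φ hY, ?_⟩
  · intro n Y hY hle
    have := hcounit Y hY
    exact tD.transfer_le_obj adj (hcounit_ge 1) hle
  · rintro X ⟨n, hX⟩
    exact tD.isIso_unit_app_of_transfer_ge adj (hcounit_ge 1) hX (hcounit_ge n)
end
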